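/- Proper time inequality: let a : [0,1] → ℝⁿ (n ≥ 2) be a continuously differentiable causal path, i.e. a'(t) ∈ Λ = {v : v₀ ≥ ‖v⃗‖} for every t ∈ [0,1]. Then its proper elapsed time satisfies ∫₀¹ √((a'(t)₀)² − ‖a'(t)⃗‖²) dt ≤ √(((a(1)−a(0))₀)² − ‖(a(1)−a(0))⃗‖²), i.e. ∫₀¹ γ̲(a'(t)) dt ≤ γ̲(a(1) − a(0)), where both sides are defined since a'(t) ∈ Λ and a(1) − a(0) ∈ Λ. -/

import Mathlib

open Finset

/-- Euclidean norm of the spatial part `v⃗ = (v₁, …, v_{n+1})` of a vector in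
the standard Lorentz vector space `ℝ^{n+2}` (so the dimension is `≥ 2`). -/
noncomputable def sNorm {n : ℕ} (v : Fin (n + 2) → ℝ) : ℝ :=
  Real.sqrt (∑ i ∈ univ.filter (fun i : Fin (n + 2) => i ≠ 0), (v i) ^ 2)

/-- The closed future cone `Λ = {v : v₀ ≥ ‖v⃗‖}`. -/
def Lam {n : ℕ} : Set (Fin (n + 2) → ℝ) := {v | sNorm v ≤ v 0}

/-- The Lorentz antinorm `γ̲(v) = √(v₀² − ‖v⃗‖²)`, defined and nonnegative on `Λ`. -/
noncomputable def anorm {n : ℕ} (v : Fin (n + 2) → ℝ) : ℝ :=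
  Real.sqrt ((v 0) ^ 2 - (sNorm v) ^ 2)

/-! The antinorm `γ̲` is concave on the future cone `Λ`: it is positively homogeneous, and
superadditive by the reverse Cauchy–Schwarz inequality `γ̲(v) γ̲(w) ≤ v₀ w₀ − ‖v⃗‖ ‖w⃗‖`.
Jensen's inequality for the uniform probability measure on `[0, 1]` then bounds the proper
time by `γ̲(∫₀¹ a')`, and `∫₀¹ a' = a(1) − a(0)` by the fundamental theorem of calculus. -/

open MeasureTheory

theorem ConcaveOn.intervalIntegral_comp_le {E : Type*} [NormedAddCommGroup E] [NormedSpace ℝ E]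
    [CompleteSpace E] {s : Set E} {g : E → ℝ} {f : ℝ → E} (hg : ConcaveOn ℝ s g)
    (hgc : ContinuousOn g s) (hsc : IsClosed s) (hf : ContinuousOn f (Set.Icc 0 1))
    (hfs : Set.MapsTo f (Set.Icc 0 1) s) :
    ∫ t in (0 : ℝ)..1, g (f t) ≤ g (∫ t in (0 : ℝ)..1, f t) := by
  have : IsProbabilityMeasure (volume.restrict (Set.Ioc (0 : ℝ) 1)) := ⟨by simp⟩
  simp only [intervalIntegral.integral_of_le zero_le_one]
  exact hg.le_map_integral hgc hsc
    ((ae_restrict_mem measurableSet_Ioc).mono fun t ht => hfs (Set.Ioc_subset_Icc_self ht))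
    ((hf.integrableOn_Icc).mono_set Set.Ioc_subset_Icc_self)
    (((hgc.comp hf hfs).integrableOn_Icc).mono_set Set.Ioc_subset_Icc_self)

section Lorentz

variable {n : ℕ}

noncomputable def spatialInner (v w : Fin (n + 2) → ℝ) : ℝ :=
  ∑ i ∈ univ.filter (fun i : Fin (n + 2) => i ≠ 0), v i * w i

lemma sNorm_nonneg (v : Fin (n + 2) → ℝ) : 0 ≤ sNorm v := Real.sqrt_nonneg _

lemma sq_sNorm (v : Fin (n + 2) → ℝ) :
    sNorm v ^ 2 = ∑ i ∈ univ.filter (fun i : Fin (n + 2) => i ≠ 0), v i ^ 2 :=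
  Real.sq_sqrt (by positivity)

lemma spatialInner_le_sNorm_mul_sNorm (v w : Fin (n + 2) → ℝ) :
    spatialInner v w ≤ sNorm v * sNorm w :=
  Real.sum_mul_le_sqrt_mul_sqrt _ _ _

lemma sNorm_add_sq (v w : Fin (n + 2) → ℝ) :
    sNorm (v + w) ^ 2 = sNorm v ^ 2 + 2 * spatialInner v w + sNorm w ^ 2 := by
  simp only [sq_sNorm, spatialInner, Pi.add_apply, add_sq, sum_add_distrib, mul_sum, mul_assoc]

lemma sNorm_add_le (v w : Fin (n + 2) → ℝ) : sNorm (v + w) ≤ sNorm v + sNorm w := by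
  refine le_of_pow_le_pow_left₀ two_ne_zero (by positivity [sNorm_nonneg v, sNorm_nonneg w]) ?_
  nlinarith [sNorm_add_sq v w, spatialInner_le_sNorm_mul_sNorm v w]

lemma sNorm_smul (c : ℝ) (v : Fin (n + 2) → ℝ) : sNorm (c • v) = |c| * sNorm v := by
  simp only [sNorm, Pi.smul_apply, smul_eq_mul, mul_pow, ← mul_sum]
  rw [Real.sqrt_mul (sq_nonneg c), Real.sqrt_sq_eq_abs]

lemma continuous_sNorm : Continuous (sNorm (n := n)) := by
  unfold sNorm; fun_prop

lemma add_mem_Lam {v w : Fin (n + 2) → ℝ} (hv : v ∈ Lam) (hw : w ∈ Lam) : v + w ∈ Lam :=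
  (sNorm_add_le v w).trans (add_le_add hv hw)

lemma smul_mem_Lam {c : ℝ} (hc : 0 ≤ c) {v : Fin (n + 2) → ℝ} (hv : v ∈ Lam) : c • v ∈ Lam := by
  show sNorm (c • v) ≤ c * v 0
  rw [sNorm_smul, abs_of_nonneg hc]
  exact mul_le_mul_of_nonneg_left hv hc

lemma convex_Lam : Convex ℝ (Lam (n := n)) :=
  fun _ hv _ hw _ _ ha hb _ => add_mem_Lam (smul_mem_Lam ha hv) (smul_mem_Lam hb hw)

lemma isClosed_Lam : IsClosed (Lam (n := n)) :=
  isClosed_le continuous_sNorm (continuous_apply 0)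

lemma continuous_anorm : Continuous (anorm (n := n)) :=
  (((continuous_apply 0).pow 2).sub (continuous_sNorm.pow 2)).sqrt

lemma sq_anorm {v : Fin (n + 2) → ℝ} (hv : v ∈ Lam) : anorm v ^ 2 = v 0 ^ 2 - sNorm v ^ 2 :=
  Real.sq_sqrt (by nlinarith [sNorm_nonneg v, show sNorm v ≤ v 0 from hv])

lemma anorm_smul (c : ℝ) (v : Fin (n + 2) → ℝ) : anorm (c • v) = |c| * anorm v := by
  simp only [anorm, sNorm_smul, Pi.smul_apply, smul_eq_mul, mul_pow, sq_abs, ← mul_sub]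
  rw [Real.sqrt_mul (sq_nonneg c), Real.sqrt_sq_eq_abs]

/-- Reverse Cauchy–Schwarz inequality on the future cone. -/
lemma anorm_mul_anorm_le {v w : Fin (n + 2) → ℝ} (hv : v ∈ Lam) (hw : w ∈ Lam) :
    anorm v * anorm w ≤ v 0 * w 0 - sNorm v * sNorm w := by
  have hv' : sNorm v ≤ v 0 := hv
  have hw' : sNorm w ≤ w 0 := hw
  have hsv := sNorm_nonneg v
  have hsw := sNorm_nonneg w
  rw [anorm, anorm, ← Real.sqrt_mul (by nlinarith)]
  refine Real.sqrt_le_iff.mpr ⟨by nlinarith, ?_⟩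
  -- `(v₀w₀ − ‖v⃗‖‖w⃗‖)² − (v₀² − ‖v⃗‖²)(w₀² − ‖w⃗‖²) = (v₀‖w⃗‖ − ‖v⃗‖w₀)²`
  nlinarith [sq_nonneg (v 0 * sNorm w - sNorm v * w 0)]

lemma anorm_add_anorm_le {v w : Fin (n + 2) → ℝ} (hv : v ∈ Lam) (hw : w ∈ Lam) :
    anorm v + anorm w ≤ anorm (v + w) := by
  refine Real.le_sqrt_of_sq_le ?_
  rw [Pi.add_apply, sNorm_add_sq]
  nlinarith [sq_anorm hv, sq_anorm hw, anorm_mul_anorm_le hv hw,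
    spatialInner_le_sNorm_mul_sNorm v w]

lemma concaveOn_anorm : ConcaveOn ℝ (Lam (n := n)) anorm := by
  refine ⟨convex_Lam, fun v hv w hw a b ha hb _ => ?_⟩
  calc a • anorm v + b • anorm w = anorm (a • v) + anorm (b • w) := by
        simp only [anorm_smul, abs_of_nonneg ha, abs_of_nonneg hb, smul_eq_mul]
    _ ≤ anorm (a • v + b • w) := anorm_add_anorm_le (smul_mem_Lam ha hv) (smul_mem_Lam hb hw)

end Lorentz

/-- proper time inequality. For a continuously differentiable
causal path `a : [0,1] → ℝ^{n+2}` (i.e. `a' t ∈ Λ` for all `t ∈ [0,1]`), the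
proper elapsed time satisfies `∫₀¹ γ̲(a'(t)) dt ≤ γ̲(a 1 − a 0)`. -/
theorem proper_time_le_anorm_of_displacement {n : ℕ}
    (a a' : ℝ → (Fin (n + 2) → ℝ))
    (hderiv : ∀ t ∈ Set.Icc (0 : ℝ) 1, HasDerivAt a (a' t) t)
    (hcont : ContinuousOn a' (Set.Icc (0 : ℝ) 1))
    (hcausal : ∀ t ∈ Set.Icc (0 : ℝ) 1, a' t ∈ Lam) :
    (∫ t in (0 : ℝ)..1, anorm (a' t)) ≤ anorm (a 1 - a 0) := by
  have huIcc : Set.uIcc (0 : ℝ) 1 = Set.Icc 0 1 := Set.uIcc_of_le zero_le_one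
  have hftc : ∫ t in (0 : ℝ)..1, a' t = a 1 - a 0 :=
    intervalIntegral.integral_eq_sub_of_hasDerivAt (huIcc ▸ hderiv)
      (huIcc ▸ hcont).intervalIntegrable
  rw [← hftc]
  exact concaveOn_anorm.intervalIntegral_comp_le continuous_anorm.continuousOn isClosed_Lam
    hcont hcausal
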